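/- arXiv:2111.11016 — 5 statements merged into one kernel-verified Lean document; each statement's English description precedes it below -/
import Mathlib

section
/- Let a ≥ 0 and ε > 0 satisfy ε ≤ 2^(a - (a/log 2)^2) if a ≥ log 2, and ε ≤ 2^(a-1) otherwise. Define x̃ = log₂(2^a/ε) + a·log₂(log₂(2^a/ε)). Then for every real x ≥ x̃, we have x^a / 2^x ≤ ε. -/
private lemma two_log_le {s : ℝ} (hs : 0 < s) : 2 * Real.log s ≤ s := by
  have hu : 0 < Real.sqrt s := Real.sqrt_pos.mpr hs
  have h1 : Real.log (Real.sqrt s) = Real.log s / 2 := Real.log_sqrt hs.le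
  have h2 : Real.log (Real.sqrt s) ≤ Real.sqrt s - 1 := Real.log_le_sub_one_of_pos hu
  nlinarith [Real.sq_sqrt hs.le, sq_nonneg (Real.sqrt s - 2)]

private lemma mul_log_le {p q : ℝ} (hp : 0 < p) (hq : 0 < q) :
    p * Real.log q ≤ p * Real.log p + (q - p) := by
  have h := Real.log_le_sub_one_of_pos (div_pos hq hp)
  rw [Real.log_div hq.ne' hp.ne'] at h
  have h2 := mul_le_mul_of_nonneg_left h hp.le
  have h3 : p * (q / p) = q := by field_simp
  nlinarith [h2]

theorem rpow_div_two_rpow_le (a ε : ℝ) (ha : 0 ≤ a) (hε : 0 < ε)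
    (hεcond : if Real.log 2 ≤ a then ε ≤ 2 ^ (a - (a / Real.log 2) ^ 2)
      else ε ≤ 2 ^ (a - 1)) :
    ∀ x : ℝ,
      Real.logb 2 (2 ^ a / ε) + a * Real.logb 2 (Real.logb 2 (2 ^ a / ε)) ≤ x →
      x ^ a / 2 ^ x ≤ ε := by
  have hl2 : (0:ℝ) < Real.log 2 := Real.log_pos (by norm_num)
  set L : ℝ := a - Real.logb 2 ε with hLdef
  have hlogb : Real.logb 2 ((2:ℝ) ^ a / ε) = L := by
    rw [Real.logb_div (by positivity) hε.ne',
      Real.logb_rpow (by norm_num) (by norm_num)]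
  have key : 1 ≤ L ∧ a ≤ L * Real.log 2 ∧ a * Real.logb 2 L ≤ L := by
    split_ifs at hεcond with hc
    · -- log 2 ≤ a
      set s : ℝ := a / Real.log 2 with hs
      have hs1 : 1 ≤ s := (one_le_div hl2).mpr hc
      have hεle : Real.logb 2 ε ≤ a - s ^ 2 := by
        calc Real.logb 2 ε ≤ Real.logb 2 ((2:ℝ) ^ (a - s ^ 2)) :=
              Real.logb_le_logb_of_le (by norm_num) hε hεcond
          _ = a - s ^ 2 := Real.logb_rpow (by norm_num) (by norm_num)
      have hLs : s ^ 2 ≤ L := by simp only [hLdef]; linarith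
      have hL1 : 1 ≤ L := le_trans (by nlinarith) hLs
      have hLpos : (0:ℝ) < L := by linarith
      refine ⟨hL1, ?_, ?_⟩
      · have h1 : s ≤ s ^ 2 := by nlinarith
        have h2 : s ≤ L := le_trans h1 hLs
        have h3 : a = s * Real.log 2 := by rw [hs, div_mul_cancel₀ _ hl2.ne']
        nlinarith
      · have hspos : 0 < s := by linarith
        have h1 : s ^ 2 * Real.log L ≤ s ^ 2 * Real.log (s ^ 2) + (L - s ^ 2) :=
          mul_log_le (by positivity) hLpos
        have h2 : Real.log (s ^ 2) = 2 * Real.log s := by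
          rw [Real.log_pow]; push_cast; ring
        have h3 : 2 * Real.log s ≤ s := two_log_le hspos
        have h4 : s * Real.log L ≤ L := by
          nlinarith [mul_nonneg (sub_nonneg.mpr hLs) (sub_nonneg.mpr hs1)]
        have h5 : a * Real.logb 2 L = s * Real.log L := by
          rw [Real.logb, hs]; ring
        linarith [h5 ▸ h4]
    · -- a < log 2
      push_neg at hc
      have hεle : Real.logb 2 ε ≤ a - 1 := by
        calc Real.logb 2 ε ≤ Real.logb 2 ((2:ℝ) ^ (a - 1)) :=
              Real.logb_le_logb_of_le (by norm_num) hε hεcond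
          _ = a - 1 := Real.logb_rpow (by norm_num) (by norm_num)
      have hL1 : 1 ≤ L := by simp only [hLdef]; linarith
      have hLpos : (0:ℝ) < L := by linarith
      refine ⟨hL1, by nlinarith, ?_⟩
      have hlogL : 0 ≤ Real.log L := Real.log_nonneg hL1
      have hlogL2 : Real.log L ≤ L - 1 := Real.log_le_sub_one_of_pos hLpos
      have h5 : a * Real.logb 2 L = (a / Real.log 2) * Real.log L := by
        rw [Real.logb]; ring
      have h6 : a / Real.log 2 ≤ 1 := by
        rw [div_le_one hl2]; linarith
      have h7 : 0 ≤ a / Real.log 2 := by positivity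
      calc a * Real.logb 2 L = (a / Real.log 2) * Real.log L := h5
        _ ≤ 1 * Real.log L := mul_le_mul_of_nonneg_right h6 hlogL
        _ ≤ L := by linarith
  obtain ⟨hL1, hA, hB⟩ := key
  have hLpos : (0:ℝ) < L := by linarith
  intro x hx
  rw [hlogb] at hx
  set X : ℝ := L + a * Real.logb 2 L with hXdef
  have hlogbL : 0 ≤ Real.logb 2 L := Real.logb_nonneg (by norm_num) hL1
  have hXL : L ≤ X := by nlinarith
  have hXpos : 0 < X := by linarith
  have hxpos : 0 < x := by linarith
  have hX2L : X ≤ 2 * L := by simp only [hXdef]; linarith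
  rw [div_le_iff₀ (by positivity)]
  rw [← Real.log_le_log_iff (by positivity) (by positivity)]
  rw [Real.log_rpow hxpos, Real.log_mul hε.ne' (by positivity),
    Real.log_rpow (by norm_num : (0:ℝ) < 2)]
  have hlogε : Real.log ε = (a - L) * Real.log 2 := by
    have h : Real.logb 2 ε = a - L := by rw [hLdef]; ring
    rw [Real.logb] at h
    field_simp at h
    linarith [h]
  rw [hlogε]
  have f1 : X * Real.log x ≤ X * Real.log X + (x - X) := mul_log_le hXpos hxpos
  have f2 : a ≤ X * Real.log 2 := le_trans hA (by nlinarith)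
  have f3 : Real.log X ≤ Real.log 2 + Real.log L := by
    rw [← Real.log_mul (by norm_num) hLpos.ne']
    exact (Real.log_le_log_iff hXpos (by positivity)).mpr hX2L
  have f4 : a * Real.log L = (X - L) * Real.log 2 := by
    simp only [hXdef, Real.logb]
    field_simp
    ring
  have g1 := mul_le_mul_of_nonneg_left f1 ha
  have g2 := mul_le_mul_of_nonneg_right f2 (sub_nonneg.mpr hx)
  have g3 := mul_le_mul_of_nonneg_left f3 (by positivity : (0:ℝ) ≤ a * X)
  have g4 : X * (a * Real.log L) = X * ((X - L) * Real.log 2) := by rw [f4]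
  nlinarith [g1, g2, g3, g4, hXpos, mul_pos hXpos hl2]
end

section
/- Under the hypotheses that a > 0, ε > 0, and ε ≤ 2^(a - (a/log 2)^2) when a ≥ log 2 (resp. ε ≤ 2^(a-1) when a < log 2), one has log₂(2^a/ε) ≥ a · log₂(log₂(2^a/ε)). -/
lemma two_log_le_self {c : ℝ} (hc : 1 ≤ c) : 2 * Real.log c ≤ c := by
  have hc0 : (0:ℝ) ≤ c := by linarith
  have h1 : Real.log (Real.sqrt c) ≤ Real.sqrt c - 1 :=
    Real.log_le_sub_one_of_pos (Real.sqrt_pos.mpr (by linarith))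
  have h2 : Real.log (Real.sqrt c) = Real.log c / 2 := Real.log_sqrt hc0
  have h3 : Real.sqrt c ^ 2 = c := Real.sq_sqrt hc0
  nlinarith [sq_nonneg (Real.sqrt c - 2)]

lemma key_ineq {c z : ℝ} (hc : 0 < c) (hz1 : 1 ≤ z)
    (hcz : c ≤ 1 ∨ c ^ 2 ≤ z) : c * Real.log z ≤ z := by
  have hz0 : (0:ℝ) < z := by linarith
  have hlz : 0 ≤ Real.log z := Real.log_nonneg hz1
  rcases hcz with h | h
  · have := Real.log_le_sub_one_of_pos hz0
    nlinarith
  · rcases le_or_gt c 1 with hc1 | hc1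
    · have := Real.log_le_sub_one_of_pos hz0
      nlinarith
    · have hc1' : 1 ≤ c := le_of_lt hc1
      have hzc : 0 < z / c ^ 2 := by positivity
      have h1 : Real.log (z / c ^ 2) ≤ z / c ^ 2 - 1 := Real.log_le_sub_one_of_pos hzc
      have h2 : Real.log (z / c ^ 2) = Real.log z - 2 * Real.log c := by
        rw [Real.log_div hz0.ne' (by positivity), Real.log_pow]
        push_cast; ring
      have h3 : 2 * Real.log c ≤ c := two_log_le_self hc1'
      have h4 : z / c ^ 2 * c ^ 2 = z := by field_simp
      -- c^2 * log z ≤ 2 c^2 log c + z - c^2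
      have h5 : c ^ 2 * Real.log z ≤ 2 * c ^ 2 * Real.log c + z - c ^ 2 := by
        have := mul_le_mul_of_nonneg_left (h2 ▸ h1) (by positivity : (0:ℝ) ≤ c ^ 2)
        nlinarith
      nlinarith [mul_pos hc hc, sq_nonneg (c - 1), mul_nonneg (sub_nonneg.mpr hc1') (sub_nonneg.mpr h)]

theorem logb_ge_a_logb_logb (a ε : ℝ) (ha : 0 < a) (hε : 0 < ε)
    (hεcond : if Real.log 2 ≤ a then ε ≤ 2 ^ (a - (a / Real.log 2) ^ 2)
      else ε ≤ 2 ^ (a - 1)) :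
    a * Real.logb 2 (Real.logb 2 (2 ^ a / ε)) ≤ Real.logb 2 (2 ^ a / ε) := by
  have hl2 : 0 < Real.log 2 := Real.log_pos one_lt_two
  set c : ℝ := a / Real.log 2 with hc
  have hc0 : 0 < c := div_pos ha hl2
  have hpow : (0:ℝ) < (2:ℝ) ^ a := Real.rpow_pos_of_pos two_pos a
  have hyval : Real.logb 2 (2 ^ a / ε) = a - Real.logb 2 ε := by
    rw [Real.logb_div hpow.ne' hε.ne', Real.logb_rpow two_pos (by norm_num)]
  set y : ℝ := Real.logb 2 (2 ^ a / ε) with hy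
  -- from condition get lower bound on y
  have hmono : ∀ t : ℝ, ε ≤ 2 ^ t → t ≤ a → a - t ≤ y := by
    intro t ht _
    have : Real.logb 2 ε ≤ Real.logb 2 ((2:ℝ) ^ t) :=
      (Real.logb_le_logb one_lt_two hε (Real.rpow_pos_of_pos two_pos t)).mpr ht
    rw [Real.logb_rpow two_pos (by norm_num)] at this
    rw [hyval]; linarith
  have hkey : 1 ≤ y ∧ (c ≤ 1 ∨ c ^ 2 ≤ y) := by
    split_ifs at hεcond with h
    · have hc1 : 1 ≤ c := (one_le_div hl2).mpr h
      have hc2 : c ^ 2 ≤ y := by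
        have := hmono (a - c ^ 2) hεcond (by nlinarith)
        linarith
      exact ⟨by nlinarith, Or.inr hc2⟩
    · push_neg at h
      have hc1 : c ≤ 1 := by rw [hc, div_le_one hl2]; linarith
      have h1 : 1 ≤ a ∨ a < 1 := le_or_gt 1 a
      have hy1 : 1 ≤ y := by
        have := hmono (a - 1) hεcond (by linarith)
        linarith
      exact ⟨hy1, Or.inl hc1⟩
  obtain ⟨hy1, hcy⟩ := hkey
  have hk := key_ineq hc0 hy1 hcy
  rw [Real.logb]
  calc a * (Real.log y / Real.log 2) = c * Real.log y := by rw [hc]; ring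
    _ ≤ y := hk
end

section
/- For every positive integer n, the inequality √(2π) · n^{n+1/2} · e^{-n} · e^{1/(12n+1)} < n! < √(2π) · n^{n+1/2} · e^{-n} · e^{1/(12n)} holds. -/
/-!
For the Stirling sequence `s n = n! / (√(2n) (n/e)^n)` and `t = 1/(2n+1)`, the series
`log ((1+t)/(1-t)) = 2 ∑ t^(2k+1)/(2k+1)` gives `log (s n) - log (s (n+1)) = ∑_{k≥1} t^(2k)/(2k+1)`.
Keeping only the first term, resp. bounding every coefficient by `1/3` and summing the geometric
series, puts this difference strictly between `1/(12n+1) - 1/(12(n+1)+1)` and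
`1/(12n) - 1/(12(n+1))`. So `log (s n) - 1/(12n+1)` strictly decreases and `log (s n) - 1/(12n)`
strictly increases, and by Stirling's formula both tend to `log √π`.
-/

open Real Filter Topology Nat Stirling

section StrictLimit

variable {α β : Type*} [TopologicalSpace α] [Preorder α] [OrderClosedTopology α]
  [PartialOrder β] [IsDirectedOrder β] [NoMaxOrder β] {f : β → α} {a : α}

theorem StrictAnti.lt_of_tendsto (hf : StrictAnti f) (h : Tendsto f atTop (𝓝 a)) (b : β) :
    a < f b := by
  obtain ⟨c, hbc⟩ := exists_gt b
  exact (hf.antitone.le_of_tendsto h c).trans_lt (hf hbc)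

theorem StrictMono.gt_of_tendsto (hf : StrictMono f) (h : Tendsto f atTop (𝓝 a)) (b : β) :
    f b < a :=
  StrictAnti.lt_of_tendsto (α := αᵒᵈ) hf h b

end StrictLimit

theorem tendsto_one_div_mul_add_atTop_nhds_zero {c : ℝ} (hc : 0 < c) (d : ℝ) :
    Tendsto (fun n : ℕ => 1 / (c * n + d)) atTop (𝓝 0) := by
  simp only [one_div]
  exact ((tendsto_natCast_atTop_atTop.const_mul_atTop hc).atTop_add
    (tendsto_const_nhds (x := d))).inv_tendsto_atTop

namespace Stirling

theorem lt_log_stirlingSeq_sdiff {n : ℕ} (hn : n ≠ 0) :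
    1 / (12 * n + 1) - 1 / (12 * (n + 1) + 1) <
      log (stirlingSeq n) - log (stirlingSeq (n + 1)) := by
  obtain ⟨m, rfl⟩ := exists_eq_add_one_of_ne_zero hn
  refine lt_of_lt_of_le ?_ (le_hasSum (log_stirlingSeq_sdiff_hasSum m) 0 fun k _ => by positivity)
  have hm : (0 : ℝ) ≤ m := m.cast_nonneg
  rw [div_sub_div _ _ (by positivity) (by positivity), div_lt_iff₀ (by positivity)]
  push_cast
  field_simp
  -- `36 (2n + 1)^2 < (12n + 1)(12n + 13)` amounts to `23 < 24n`
  nlinarith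

theorem log_stirlingSeq_sdiff_lt {n : ℕ} (hn : n ≠ 0) :
    log (stirlingSeq n) - log (stirlingSeq (n + 1)) < 1 / (12 * n) - 1 / (12 * (n + 1)) := by
  obtain ⟨m, rfl⟩ := exists_eq_add_one_of_ne_zero hn
  set x : ℝ := ((m + 1 : ℕ) : ℝ)
  have hx : 0 < x := by positivity
  set q : ℝ := (1 / (2 * x + 1)) ^ 2 with hq
  have hq0 : 0 < q := by positivity
  have hq1 : q < 1 := by
    rw [hq, div_pow, one_pow, div_lt_one (by positivity)]
    nlinarith
  have hgeom := (hasSum_geometric_of_lt_one hq0.le hq1).mul_left (q / 3)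
  have hterm (k : ℕ) : 1 / (2 * ((k + 1 : ℕ) : ℝ) + 1) * q ^ (k + 1) ≤ q / 3 * q ^ k := by
    rw [_root_.pow_succ', ← mul_assoc, div_eq_mul_one_div q 3, mul_comm q]
    gcongr
    push_cast
    linarith [k.cast_nonneg (α := ℝ)]
  refine (hasSum_lt (i := 1) hterm ?_ (log_stirlingSeq_sdiff_hasSum m) hgeom).trans_eq ?_
  · norm_num
    nlinarith
  · have h1q : 1 - q = 4 * x * (x + 1) / (2 * x + 1) ^ 2 := by rw [hq]; field_simp; ring
    rw [h1q, hq]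
    field_simp
    ring

theorem tendsto_log_stirlingSeq : Tendsto (fun n => log (stirlingSeq n)) atTop (𝓝 (log √π)) :=
  tendsto_stirlingSeq_sqrt_pi.log (by positivity)

theorem sqrt_pi_mul_exp_lt_stirlingSeq {n : ℕ} (hn : n ≠ 0) :
    √π * exp (1 / (12 * n + 1)) < stirlingSeq n := by
  obtain ⟨m, rfl⟩ := exists_eq_add_one_of_ne_zero hn
  let f (k : ℕ) : ℝ := log (stirlingSeq (k + 1)) - 1 / (12 * ((k + 1 : ℕ) : ℝ) + 1)
  have hf : StrictAnti f := strictAnti_nat_of_succ_lt fun k => by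
    have := lt_log_stirlingSeq_sdiff k.succ_ne_zero
    simp only [f]
    push_cast at this ⊢
    linarith
  have hlim : Tendsto f atTop (𝓝 (log √π - 0)) :=
    (tendsto_log_stirlingSeq.comp (tendsto_add_atTop_nat 1)).sub
      ((tendsto_one_div_mul_add_atTop_nhds_zero (by norm_num) 1).comp (tendsto_add_atTop_nat 1))
  have := hf.lt_of_tendsto hlim m
  calc √π * exp (1 / (12 * ((m + 1 : ℕ) : ℝ) + 1))
      = exp (log √π + 1 / (12 * ((m + 1 : ℕ) : ℝ) + 1)) := by rw [exp_add, exp_log (by positivity)]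
    _ < exp (log (stirlingSeq (m + 1))) := exp_lt_exp.2 (by linarith)
    _ = stirlingSeq (m + 1) := exp_log (stirlingSeq'_pos m)

theorem stirlingSeq_lt_sqrt_pi_mul_exp {n : ℕ} (hn : n ≠ 0) :
    stirlingSeq n < √π * exp (1 / (12 * n)) := by
  obtain ⟨m, rfl⟩ := exists_eq_add_one_of_ne_zero hn
  let f (k : ℕ) : ℝ := log (stirlingSeq (k + 1)) - 1 / (12 * ((k + 1 : ℕ) : ℝ))
  have hf : StrictMono f := strictMono_nat_of_lt_succ fun k => by
    have := log_stirlingSeq_sdiff_lt k.succ_ne_zero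
    simp only [f]
    push_cast at this ⊢
    linarith
  have hlim : Tendsto f atTop (𝓝 (log √π - 0)) := by
    have h := tendsto_one_div_mul_add_atTop_nhds_zero (c := 12) (by norm_num) 0
    simp only [add_zero] at h
    exact (tendsto_log_stirlingSeq.comp (tendsto_add_atTop_nat 1)).sub
      (h.comp (tendsto_add_atTop_nat 1))
  have := hf.gt_of_tendsto hlim m
  calc stirlingSeq (m + 1) = exp (log (stirlingSeq (m + 1))) := (exp_log (stirlingSeq'_pos m)).symm
    _ < exp (log √π + 1 / (12 * ((m + 1 : ℕ) : ℝ))) := exp_lt_exp.2 (by linarith)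
    _ = √π * exp (1 / (12 * ((m + 1 : ℕ) : ℝ))) := by rw [exp_add, exp_log (by positivity)]

theorem factorial_eq_stirlingSeq_mul {n : ℕ} (hn : n ≠ 0) :
    (n ! : ℝ) = stirlingSeq n * (√(2 * n) * (n / exp 1) ^ n) :=
  (div_mul_cancel₀ _ (by positivity)).symm

end Stirling

theorem sqrt_two_pi_mul_rpow_mul_exp_neg (n : ℕ) :
    √(2 * π) * (n : ℝ) ^ ((n : ℝ) + 1 / 2) * exp (-n) = √π * (√(2 * n) * (n / exp 1) ^ n) := by
  rw [rpow_add' n.cast_nonneg (by positivity), rpow_natCast, ← sqrt_eq_rpow, div_pow,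
    ← exp_nat_mul, mul_one, exp_neg, sqrt_mul' _ n.cast_nonneg, sqrt_mul' _ pi_pos.le]
  ring

theorem robbins_stirling (n : ℕ) (hn : 1 ≤ n) :
    Real.sqrt (2 * Real.pi) * (n : ℝ) ^ ((n : ℝ) + 1 / 2) * Real.exp (-(n : ℝ)) *
        Real.exp (1 / (12 * (n : ℝ) + 1)) < (n.factorial : ℝ) ∧
    (n.factorial : ℝ) < Real.sqrt (2 * Real.pi) * (n : ℝ) ^ ((n : ℝ) + 1 / 2) *
        Real.exp (-(n : ℝ)) * Real.exp (1 / (12 * (n : ℝ))) := by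
  have hn0 : n ≠ 0 := by omega
  have hscale : 0 < √(2 * n : ℝ) * (n / exp 1) ^ n := by positivity
  rw [sqrt_two_pi_mul_rpow_mul_exp_neg, factorial_eq_stirlingSeq_mul hn0]
  constructor
  · rw [mul_right_comm]
    exact mul_lt_mul_of_pos_right (sqrt_pi_mul_exp_lt_stirlingSeq hn0) hscale
  · rw [mul_right_comm]
    exact mul_lt_mul_of_pos_right (stirlingSeq_lt_sqrt_pi_mul_exp hn0) hscale
end

section
/- Let m, n be positive integers with m ≤ 2n, and let f ∈ C^{2n+1}(ℝ) satisfy |f^{(2n+1)}(x)| ≤ M for all x ∈ ℝ. Then the residual R_f(x,n,m,h) of the general-order central difference formula satisfies |R_f(x,n,m,h)| ≤ M·m·(e·m/2)^{2n} for all x ∈ ℝ and h > 0. -/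
/-!
Bound the sum term by term. Every node `l ∈ [-n:n] \ {0}` has `|l| ≥ 1`, so each of the
`C(2n-1, 2n-m)` products in `j · a⁽ᵐ⁾ₙ,ⱼ` is at most `∏ |l| = (n!)²`, while `|j|^{2n} ≤ n^{2n}`;
and `∑ⱼ 1/((n+j)!(n-j)!) ≤ 4ⁿ/(2n)!` by the binomial theorem. What remains is
`m! C(2n-1, 2n-m) ≤ m (2n)^{m-1} ≤ m · m^{2n}`, `(n!)² 4ⁿ ≤ (2n+1)!` and
`n^{2n} ≤ (2n)! (e/2)^{2n}`.
-/

open Finset Nat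

section ElementarySymmetric

variable {ι : Type*} {S : Finset ι} {x : ι → ℝ}

theorem abs_prod_le_prod_abs_of_subset {T : Finset ι} (hT : T ⊆ S) (hx : ∀ i ∈ S, 1 ≤ |x i|) :
    |∏ i ∈ T, x i| ≤ ∏ i ∈ S, |x i| := by
  rw [abs_prod]
  exact prod_le_prod_of_subset_of_one_le hT (fun _ _ ↦ abs_nonneg _) fun i hi _ ↦ hx i hi

theorem abs_mul_sum_powersetCard_erase_le [DecidableEq ι] (hx : ∀ i ∈ S, 1 ≤ |x i|) {j : ι}
    (hj : j ∈ S) (k : ℕ) :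
    |x j * ∑ T ∈ powersetCard k (S.erase j), ∏ i ∈ T, x i|
      ≤ (S.card - 1).choose k * ∏ i ∈ S, |x i| := by
  have hsub : ∀ T ∈ powersetCard k (S.erase j), T ⊆ S.erase j := fun T hT ↦
    (mem_powersetCard.1 hT).1
  calc |x j * ∑ T ∈ powersetCard k (S.erase j), ∏ i ∈ T, x i|
      = |∑ T ∈ powersetCard k (S.erase j), ∏ i ∈ insert j T, x i| := by
        rw [mul_sum]
        refine congrArg _ (sum_congr rfl fun T hT ↦ ?_)
        rw [prod_insert fun hjT ↦ by simpa using hsub T hT hjT]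
    _ ≤ ∑ T ∈ powersetCard k (S.erase j), |∏ i ∈ insert j T, x i| := abs_sum_le_sum_abs _ _
    _ ≤ ∑ T ∈ powersetCard k (S.erase j), ∏ i ∈ S, |x i| :=
        sum_le_sum fun T hT ↦ abs_prod_le_prod_abs_of_subset
          (insert_subset hj ((hsub T hT).trans (erase_subset j S))) hx
    _ = (S.card - 1).choose k * ∏ i ∈ S, |x i| := by
        rw [sum_const, card_powersetCard, card_erase_of_mem hj, nsmul_eq_mul]

end ElementarySymmetric

theorem card_Icc_erase_zero (n : ℕ) : ((Icc (-(n : ℤ)) n).erase 0).card = 2 * n := by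
  rw [card_erase_of_mem (by simp), Int.card_Icc]
  omega

theorem prod_abs_Icc_erase_zero (n : ℕ) :
    ∏ l ∈ (Icc (-(n : ℤ)) n).erase 0, |(l : ℝ)| = (n ! : ℝ) ^ 2 := by
  induction n with
  | zero => simp
  | succ n ih =>
    have hnodes : (Icc (-((n + 1 : ℕ) : ℤ)) (n + 1 : ℕ)).erase 0
        = insert (-((n : ℤ) + 1)) (insert ((n : ℤ) + 1) ((Icc (-(n : ℤ)) n).erase 0)) := by
      ext l
      simp only [mem_erase, mem_Icc, mem_insert]
      omega
    rw [hnodes, prod_insert (by simp; omega), prod_insert (by simp), ih, factorial_succ]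
    push_cast
    rw [abs_neg, abs_of_nonneg (by positivity)]
    ring

theorem abs_pow_mul_sum_powersetCard_le (n k : ℕ) {j : ℤ}
    (hj : j ∈ (Icc (-(n : ℤ)) n).erase 0) :
    |(j : ℝ) ^ (2 * n + 1) *
        ∑ T ∈ powersetCard k (((Icc (-(n : ℤ)) n).erase 0).erase j), ∏ l ∈ T, (l : ℝ)|
      ≤ (n : ℝ) ^ (2 * n) * (2 * n - 1).choose k * (n ! : ℝ) ^ 2 := by
  have hone : ∀ l ∈ (Icc (-(n : ℤ)) n).erase 0, 1 ≤ |(l : ℝ)| := fun l hl ↦ by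
    rw [← Int.cast_abs]
    exact_mod_cast Int.one_le_abs (ne_of_mem_erase hl)
  have hjn : |(j : ℝ)| ≤ n := by
    rw [← Int.cast_abs]
    exact_mod_cast abs_le.2 (mem_Icc.1 (mem_of_mem_erase hj))
  have hsum := abs_mul_sum_powersetCard_erase_le hone hj k
  rw [card_Icc_erase_zero, prod_abs_Icc_erase_zero] at hsum
  rw [pow_succ, mul_assoc, abs_mul, abs_pow, mul_assoc]
  gcongr

theorem sum_Icc_inv_factorial_mul_factorial (n : ℕ) :
    ∑ j ∈ Icc (-(n : ℤ)) n, (((n + j).toNat ! : ℝ) * ((n - j).toNat ! : ℝ))⁻¹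
      = 4 ^ n / ((2 * n) ! : ℝ) := by
  have hreindex : ∑ j ∈ Icc (-(n : ℤ)) n, (((n + j).toNat ! : ℝ) * ((n - j).toNat ! : ℝ))⁻¹
      = ∑ i ∈ range (2 * n + 1), ((i ! : ℝ) * ((2 * n - i) ! : ℝ))⁻¹ := by
    refine sum_nbij' (fun j ↦ (n + j).toNat) (fun i ↦ (i : ℤ) - n) ?_ ?_ ?_ ?_ ?_
    all_goals intro a ha; simp only [mem_range, mem_Icc] at ha ⊢
    · omega
    · omega
    · omega
    · omega
    · congr 4; all_goals omega
  have hterm : ∀ i ∈ range (2 * n + 1),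
      ((i ! : ℝ) * ((2 * n - i) ! : ℝ))⁻¹ = ((2 * n).choose i : ℝ) / ((2 * n) ! : ℝ) := by
    intro i hi
    rw [eq_div_iff (by positivity), ← choose_mul_factorial_mul_factorial (mem_range_succ_iff.1 hi)]
    push_cast
    field_simp
  rw [hreindex, sum_congr rfl hterm, ← sum_div, ← Nat.cast_sum, sum_range_choose, pow_mul]
  norm_num

theorem abs_sum_central_difference_le (n k : ℕ) (g : ℤ → ℝ) {M : ℝ} (hg : ∀ j, |g j| ≤ M) :
    |∑ j ∈ (Icc (-(n : ℤ)) n).erase 0,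
        (-1 : ℝ) ^ j * g j * (j : ℝ) ^ (2 * n + 1) *
          (∑ T ∈ powersetCard k (((Icc (-(n : ℤ)) n).erase 0).erase j), ∏ l ∈ T, (l : ℝ)) /
          (((n + j).toNat ! : ℝ) * ((n - j).toNat ! : ℝ))|
      ≤ M * ((n : ℝ) ^ (2 * n) * (2 * n - 1).choose k * (n ! : ℝ) ^ 2) *
          (4 ^ n / ((2 * n) ! : ℝ)) := by
  have hM : 0 ≤ M := (abs_nonneg _).trans (hg 0)
  rw [← sum_Icc_inv_factorial_mul_factorial, mul_sum]
  refine (abs_sum_le_sum_abs _ _).trans ((sum_le_sum fun j hj ↦ ?_).trans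
    (sum_le_sum_of_subset_of_nonneg (erase_subset 0 _) fun _ _ _ ↦ by positivity))
  have hD : (0 : ℝ) < (n + j).toNat ! * (n - j).toNat ! := by positivity
  rw [mul_assoc _ (g j), mul_assoc _ (g j * _), mul_assoc (g j), abs_div, abs_mul, abs_mul,
    abs_neg_one_zpow, one_mul, abs_of_pos hD, div_eq_mul_inv]
  gcongr
  · exact hg j
  · exact abs_pow_mul_sum_powersetCard_le n k hj

theorem factorial_mul_choose_le {m N : ℕ} (hm : 1 ≤ m) (hmN : m ≤ N) :
    m ! * (N - 1).choose (N - m) ≤ m * N ^ (m - 1) := by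
  obtain ⟨k, rfl⟩ : ∃ k, m = k + 1 := ⟨m - 1, by omega⟩
  rw [show N - (k + 1) = N - 1 - k by omega, choose_symm (by omega), factorial_succ, mul_assoc,
    ← descFactorial_eq_factorial_mul_choose, add_tsub_cancel_right]
  gcongr
  exact (descFactorial_le_pow _ _).trans (Nat.pow_le_pow_left (sub_le N 1) k)

theorem pow_le_pow_of_exp_one_le {m N : ℕ} (hm : Real.exp 1 ≤ m) (hmN : m ≤ N) :
    (N : ℝ) ^ m ≤ (m : ℝ) ^ N := by
  have hm0 : (0 : ℝ) < m := (Real.exp_pos 1).trans_le hm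
  have hmN' : (m : ℝ) ≤ N := Nat.cast_le.2 hmN
  have hlog := Real.log_div_self_antitoneOn hm (hm.trans hmN') hmN'
  simp only at hlog
  rw [div_le_div_iff₀ (hm0.trans_le hmN') hm0] at hlog
  rw [← Real.log_le_log_iff (pow_pos (hm0.trans_le hmN') m) (pow_pos hm0 N), Real.log_pow,
    Real.log_pow]
  linarith

theorem pow_pred_le_pow {m N : ℕ} (hm : 1 ≤ m) (hmN : m ≤ N) : N ^ (m - 1) ≤ m ^ N := by
  rcases show m = 1 ∨ m = 2 ∨ 3 ≤ m by omega with rfl | rfl | h3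
  · simp
  · simpa using (Nat.lt_two_pow_self (n := N)).le
  · have h3' : (3 : ℝ) ≤ m := by exact_mod_cast h3
    have he : Real.exp 1 ≤ m := by linarith [Real.exp_one_lt_d9]
    have := pow_le_pow_of_exp_one_le he hmN
    exact (Nat.pow_le_pow_right (by omega) (sub_le m 1)).trans (by exact_mod_cast this)

theorem factorial_sq_mul_four_pow_le (n : ℕ) : n ! ^ 2 * 4 ^ n ≤ (2 * n + 1) ! := by
  have hmid : (2 * n).choose n * (n ! * n !) = (2 * n) ! := by
    simpa [two_mul, mul_assoc] using choose_mul_factorial_mul_factorial (le_add_right n n)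
  calc n ! ^ 2 * 4 ^ n ≤ n ! ^ 2 * ((2 * n + 1) * (2 * n).choose n) :=
        Nat.mul_le_mul_left _ (four_pow_le_two_mul_add_one_mul_central_binom n)
    _ = (2 * n + 1) ! := by rw [factorial_succ, ← hmid]; ring

theorem pow_le_factorial_mul_exp_one_pow (k : ℕ) : (k : ℝ) ^ k ≤ k ! * Real.exp 1 ^ k := by
  have h := Real.pow_div_factorial_le_exp (x := (k : ℝ)) (Nat.cast_nonneg k) k
  rw [div_le_iff₀ (by positivity), ← Real.exp_one_pow] at h
  linarith

theorem residual_constant_le {m n : ℕ} (hm : 1 ≤ m) (hmn : m ≤ 2 * n) {M : ℝ}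
    (hM : 0 ≤ M) :
    (m ! : ℝ) / (2 * n + 1) ! * (M * ((n : ℝ) ^ (2 * n) * (2 * n - 1).choose (2 * n - m) *
        (n ! : ℝ) ^ 2) * (4 ^ n / ((2 * n) ! : ℝ)))
      ≤ M * m * (Real.exp 1 * m / 2) ^ (2 * n) := by
  have hchoose : (m ! : ℝ) * (2 * n - 1).choose (2 * n - m) ≤ m * (m : ℝ) ^ (2 * n) := by
    exact_mod_cast (factorial_mul_choose_le hm hmn).trans
      (Nat.mul_le_mul_left m (pow_pred_le_pow hm hmn))
  have hfactorial : (n ! : ℝ) ^ 2 * 4 ^ n ≤ (2 * n + 1) ! := by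
    exact_mod_cast factorial_sq_mul_four_pow_le n
  have hpow : (n : ℝ) ^ (2 * n) * 2 ^ (2 * n) ≤ (2 * n) ! * Real.exp 1 ^ (2 * n) := by
    have := pow_le_factorial_mul_exp_one_pow (2 * n)
    push_cast at this
    rwa [mul_pow, mul_comm] at this
  calc (m ! : ℝ) / (2 * n + 1) ! * (M * ((n : ℝ) ^ (2 * n) * (2 * n - 1).choose (2 * n - m) *
          (n ! : ℝ) ^ 2) * (4 ^ n / ((2 * n) ! : ℝ)))
      = M * ((m ! * (2 * n - 1).choose (2 * n - m)) * ((n : ℝ) ^ (2 * n) * 2 ^ (2 * n)) *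
          ((n ! : ℝ) ^ 2 * 4 ^ n)) / ((2 * n) ! * (2 * n + 1) ! * 2 ^ (2 * n)) := by
        field_simp
    _ ≤ M * ((m * (m : ℝ) ^ (2 * n)) * ((2 * n) ! * Real.exp 1 ^ (2 * n)) * (2 * n + 1) !) /
          ((2 * n) ! * (2 * n + 1) ! * 2 ^ (2 * n)) := by
        gcongr
    _ = M * m * (Real.exp 1 * m / 2) ^ (2 * n) := by
        rw [div_pow, mul_pow]
        field_simp

theorem residual_bound_general (m n : ℕ) (hm : 1 ≤ m) (hmn : m ≤ 2 * n)
    (f : ℝ → ℝ) (M : ℝ)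
    (hM : ∀ x : ℝ, |iteratedDeriv (2 * n + 1) f x| ≤ M)
    (ξ : ℤ → ℝ) :
    |((-1 : ℝ) ^ (m + 1) * (m.factorial : ℝ) / ((2 * n + 1).factorial : ℝ)) *
        ∑ j ∈ (Finset.Icc (-(n : ℤ)) n).erase 0,
          (-1 : ℝ) ^ j * iteratedDeriv (2 * n + 1) f (ξ j) * (j : ℝ) ^ (2 * n + 1) *
            (∑ T ∈ Finset.powersetCard (2 * n - m)
                (((Finset.Icc (-(n : ℤ)) n).erase 0).erase j), ∏ l ∈ T, (l : ℝ)) /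
            (((n + j).toNat.factorial : ℝ) * ((n - j).toNat.factorial : ℝ))|
      ≤ M * m * (Real.exp 1 * m / 2) ^ (2 * n) := by
  rw [abs_mul, abs_div, abs_mul, abs_pow, abs_neg, abs_one, one_pow, one_mul, Nat.abs_cast,
    Nat.abs_cast]
  refine le_trans ?_ (residual_constant_le hm hmn ((abs_nonneg _).trans (hM 0)))
  gcongr
  exact abs_sum_central_difference_le n (2 * n - m) (fun j ↦ iteratedDeriv (2 * n + 1) f (ξ j))
    fun j ↦ hM (ξ j)

theorem residual_bound (m n : ℕ) (hm : 1 ≤ m) (hn : 1 ≤ n) (hmn : m ≤ 2 * n)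
    (f : ℝ → ℝ) (hf : ContDiff ℝ (2 * n + 1 : ℕ) f) (M : ℝ)
    (hM : ∀ x : ℝ, |iteratedDeriv (2 * n + 1) f x| ≤ M)
    (ξ : ℤ → ℝ) (h : ℝ) (hh : 0 < h) :
    |((-1 : ℝ) ^ (m + 1) * (m.factorial : ℝ) / ((2 * n + 1).factorial : ℝ)) *
        ∑ j ∈ (Finset.Icc (-(n : ℤ)) n).erase 0,
          (-1 : ℝ) ^ j * iteratedDeriv (2 * n + 1) f (ξ j) * (j : ℝ) ^ (2 * n + 1) *
            (∑ T ∈ Finset.powersetCard (2 * n - m)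
                (((Finset.Icc (-(n : ℤ)) n).erase 0).erase j), ∏ l ∈ T, (l : ℝ)) /
            (((n + j).toNat.factorial : ℝ) * ((n - j).toNat.factorial : ℝ))|
      ≤ M * m * (Real.exp 1 * m / 2) ^ (2 * n) :=
  residual_bound_general m n hm hmn f M hM ξ
end

section
/- For any positive integers m and n with m ≤ 2n, the sum D^{(m)}_n := ∑_{j=-n}^{n} |d^{(m)}_{n,j}| of the absolute values of the central difference coefficients satisfies D^{(m)}_n ≤ 2m·(2(1 + log n))^m. -/
/-!
For `j ≠ 0` the numerator of `d^{(m)}_{n,j}` is the elementary symmetric function `e_{2n-m}` of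
the `2n - 1` numbers `l ∈ [-n:n] \ {0, j}`. Factoring out their product `(n!)² / |j|` turns it
into `e_{m-1}` of the reciprocals `1 / |l|`, and Maclaurin's inequality
`(m-1)! e_{m-1}(x) ≤ (∑ x)^{m-1}` bounds this by `(2 H_n)^{m-1} ≤ (2 (1 + log n))^{m-1}`.
Together with `(n+j)! (n-j)! ≥ (n!)²` this gives `|d_j| ≤ m |j|⁻¹ (2 (1 + log n))^{m-1}`;
summing over `j ≠ 0` costs one more factor `2 H_n`, and `|d_0|` is at most the sum of the others.
-/

/-- The general-order central difference coefficient `d^{(m)}_{n,j}`. -/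
noncomputable def centralDiffCoef (m n : ℕ) (j : ℤ) : ℝ :=
  if j = 0 then
    -∑ i ∈ (Finset.Icc (-(n : ℤ)) n).erase 0,
      (-1 : ℝ) ^ ((m : ℤ) - i) * (m.factorial : ℝ) *
        (∑ T ∈ Finset.powersetCard (2 * n - m)
            (((Finset.Icc (-(n : ℤ)) n).erase 0).erase i), ∏ l ∈ T, (l : ℝ)) /
        (((n + i).toNat.factorial : ℝ) * ((n - i).toNat.factorial : ℝ))
  else
    (-1 : ℝ) ^ ((m : ℤ) - j) * (m.factorial : ℝ) *
      (∑ T ∈ Finset.powersetCard (2 * n - m)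
          (((Finset.Icc (-(n : ℤ)) n).erase 0).erase j), ∏ l ∈ T, (l : ℝ)) /
      (((n + j).toNat.factorial : ℝ) * ((n - j).toNat.factorial : ℝ))

open Finset Nat

section ElementarySymmetric

variable {ι R : Type*} [DecidableEq ι]

lemma pow_succ_add_mul_mul_pow_le_add_pow_succ [CommRing R] [LinearOrder R] [IsStrictOrderedRing R]
    {a b : R} (ha : 0 ≤ a) (hb : 0 ≤ b) (k : ℕ) :
    b ^ (k + 1) + (k + 1) * a * b ^ k ≤ (a + b) ^ (k + 1) := by
  induction k with
  | zero => simp [add_comm]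
  | succ k ih =>
    have hbk : 0 ≤ b ^ k := pow_nonneg hb k
    rw [pow_succ b k] at ih
    rw [pow_succ (a + b) (k + 1), pow_succ b (k + 1), pow_succ b k]
    push_cast
    nlinarith [mul_le_mul_of_nonneg_right ih (add_nonneg ha hb), mul_nonneg (mul_nonneg ha ha) hbk]

lemma sum_powersetCard_succ_insert_prod [CommSemiring R] {x : ι} {s : Finset ι} (hx : x ∉ s)
    (f : ι → R) (k : ℕ) :
    ∑ T ∈ powersetCard (k + 1) (insert x s), ∏ l ∈ T, f l
      = ∑ T ∈ powersetCard (k + 1) s, ∏ l ∈ T, f l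
        + f x * ∑ T ∈ powersetCard k s, ∏ l ∈ T, f l := by
  have hxT : ∀ T ∈ powersetCard k s, x ∉ T := fun T hT h => hx ((mem_powersetCard.mp hT).1 h)
  have hdisj : Disjoint (powersetCard (k + 1) s) ((powersetCard k s).image (insert x)) := by
    refine disjoint_left.mpr fun T hT hT' => ?_
    obtain ⟨U, -, rfl⟩ := mem_image.mp hT'
    exact hx ((mem_powersetCard.mp hT).1 (mem_insert_self x U))
  rw [powersetCard_succ_insert hx, sum_union hdisj, sum_image, mul_sum]
  · exact congrArg _ (sum_congr rfl fun T hT => prod_insert (hxT T hT))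
  · intro T hT U hU hTU
    simpa [erase_insert (hxT T hT), erase_insert (hxT U hU)] using congrArg (erase · x) hTU

lemma factorial_mul_sum_powersetCard_prod_le_pow [CommRing R] [LinearOrder R]
    [IsStrictOrderedRing R] {s : Finset ι} {f : ι → R} (hf : ∀ i ∈ s, 0 ≤ f i) (k : ℕ) :
    k ! * ∑ T ∈ powersetCard k s, ∏ l ∈ T, f l ≤ (∑ l ∈ s, f l) ^ k := by
  induction s using Finset.induction_on generalizing k with
  | empty =>
    cases k with
    | zero => simp
    | succ k => simp [powersetCard_eq_empty.mpr (show #(∅ : Finset ι) < k + 1 by simp)]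
  | @insert x s hx ih =>
    have hfs : ∀ i ∈ s, 0 ≤ f i := fun i hi => hf i (mem_insert_of_mem hi)
    have hfx : 0 ≤ f x := hf x (mem_insert_self x s)
    cases k with
    | zero => simp
    | succ k =>
      rw [sum_powersetCard_succ_insert_prod hx, sum_insert hx, Nat.factorial_succ]
      have hmix : ((k + 1) * k ! : ℕ) * (f x * ∑ T ∈ powersetCard k s, ∏ l ∈ T, f l)
          ≤ (k + 1) * f x * (∑ l ∈ s, f l) ^ k := by
        push_cast
        have hk : (0 : R) ≤ k + 1 := by positivity
        linarith [mul_le_mul_of_nonneg_left (ih hfs k) (mul_nonneg hk hfx)]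
      calc _ = ((k + 1) * k ! : ℕ) * ∑ T ∈ powersetCard (k + 1) s, ∏ l ∈ T, f l
            + ((k + 1) * k ! : ℕ) * (f x * ∑ T ∈ powersetCard k s, ∏ l ∈ T, f l) := mul_add _ _ _
        _ ≤ (∑ l ∈ s, f l) ^ (k + 1) + (k + 1) * f x * (∑ l ∈ s, f l) ^ k :=
          add_le_add (ih hfs (k + 1)) hmix
        _ ≤ _ := pow_succ_add_mul_mul_pow_le_add_pow_succ hfx (sum_nonneg hfs) k

lemma sum_powersetCard_prod_eq_prod_mul_sum_powersetCard_prod_inv [Field R] {s : Finset ι}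
    {g : ι → R} (hg : ∀ i ∈ s, g i ≠ 0) {k : ℕ} (hk : k ≤ #s) :
    ∑ T ∈ powersetCard k s, ∏ l ∈ T, g l
      = (∏ l ∈ s, g l) * ∑ R ∈ powersetCard (#s - k) s, ∏ l ∈ R, (g l)⁻¹ := by
  rw [mul_sum]
  refine sum_nbij' (s \ ·) (s \ ·) ?_ ?_ ?_ ?_ ?_
  · intro T hT
    obtain ⟨hsub, hcard⟩ := mem_powersetCard.mp hT
    exact mem_powersetCard.mpr ⟨sdiff_subset, by rw [card_sdiff_of_subset hsub, hcard]⟩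
  · intro R hR
    obtain ⟨hsub, hcard⟩ := mem_powersetCard.mp hR
    exact mem_powersetCard.mpr ⟨sdiff_subset, by rw [card_sdiff_of_subset hsub, hcard]; omega⟩
  · exact fun T hT => Finset.sdiff_sdiff_eq_self (mem_powersetCard.mp hT).1
  · exact fun R hR => Finset.sdiff_sdiff_eq_self (mem_powersetCard.mp hR).1
  · intro T hT
    have hsub := (mem_powersetCard.mp hT).1
    have hsT : ∏ l ∈ s \ T, g l ≠ 0 := prod_ne_zero_iff.mpr fun l hl => hg l (sdiff_subset hl)
    rw [prod_inv_distrib, ← prod_sdiff hsub]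
    field_simp

end ElementarySymmetric

lemma Nat.factorial_mul_factorial_le_of_add_eq {a b n : ℕ} (h : a + b = 2 * n) :
    n ! * n ! ≤ a ! * b ! := by
  have hab := add_choose_mul_factorial_mul_factorial a b
  have hnn := add_choose_mul_factorial_mul_factorial n n
  rw [h, mul_assoc] at hab
  rw [← two_mul, ← centralBinom_eq_two_mul_choose, mul_assoc, ← hab] at hnn
  refine le_of_mul_le_mul_left ?_ (centralBinom_pos n)
  rw [hnn]
  exact Nat.mul_le_mul_right _ (choose_le_centralBinom b n)

noncomputable def puncturedIcc (n : ℕ) : Finset ℤ := (Icc (-(n : ℤ)) n).erase 0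

lemma puncturedIcc_succ (n : ℕ) :
    puncturedIcc (n + 1) = insert ((n : ℤ) + 1) (insert (-(n : ℤ) - 1) (puncturedIcc n)) := by
  ext a
  simp only [puncturedIcc, mem_erase, mem_Icc, mem_insert]
  omega

lemma card_puncturedIcc (n : ℕ) : #(puncturedIcc n) = 2 * n := by
  rw [puncturedIcc, card_erase_of_mem (by simp), Int.card_Icc]
  omega

@[to_additive]
lemma prod_puncturedIcc_eq_mul_self_of_even {M : Type*} [CommMonoid M] {g : ℤ → M}
    (hg : ∀ l, g (-l) = g l) (n : ℕ) :
    ∏ l ∈ puncturedIcc n, g l = (∏ i ∈ range n, g (i + 1)) * ∏ i ∈ range n, g (i + 1) := by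
  induction n with
  | zero => simp [puncturedIcc]
  | succ n ih =>
    have hpos : (n : ℤ) + 1 ∉ insert (-(n : ℤ) - 1) (puncturedIcc n) := by
      simp only [puncturedIcc, mem_insert, mem_erase, mem_Icc]
      omega
    have hneg : -(n : ℤ) - 1 ∉ puncturedIcc n := by
      simp only [puncturedIcc, mem_erase, mem_Icc]
      omega
    rw [puncturedIcc_succ, prod_insert hpos, prod_insert hneg, ih, prod_range_succ,
      show -(n : ℤ) - 1 = -((n : ℤ) + 1) by ring, hg]
    ac_rfl

lemma prod_abs_puncturedIcc (n : ℕ) : ∏ l ∈ puncturedIcc n, |(l : ℝ)| = n ! * n ! := by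
  have hfac : ∏ i ∈ range n, |(((i : ℤ) + 1 : ℤ) : ℝ)| = n ! := by
    rw [← prod_range_add_one_eq_factorial]
    push_cast
    exact prod_congr rfl fun i _ => abs_of_nonneg (by positivity)
  rw [prod_puncturedIcc_eq_mul_self_of_even (fun l => by push_cast; exact abs_neg _), hfac]

lemma sum_inv_abs_puncturedIcc_le (n : ℕ) :
    ∑ l ∈ puncturedIcc n, |(l : ℝ)|⁻¹ ≤ 2 * (1 + Real.log n) := by
  have hharm : ∑ i ∈ range n, |(((i : ℤ) + 1 : ℤ) : ℝ)|⁻¹ = harmonic n := by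
    rw [harmonic]
    push_cast
    exact sum_congr rfl fun i _ => by rw [abs_of_nonneg (by positivity)]
  rw [sum_puncturedIcc_eq_add_self_of_even (fun l => by push_cast; rw [abs_neg]), hharm]
  linarith [harmonic_le_one_add_log n]

lemma centralDiffCoef_zero (m n : ℕ) :
    centralDiffCoef m n 0 = -∑ i ∈ puncturedIcc n, centralDiffCoef m n i := by
  rw [centralDiffCoef, if_pos rfl]
  exact congrArg _ (sum_congr rfl fun i hi => by rw [centralDiffCoef, if_neg (ne_of_mem_erase hi)])

lemma centralDiffCoef_of_ne_zero {m n : ℕ} {j : ℤ} (hj : j ≠ 0) :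
    centralDiffCoef m n j = (-1 : ℝ) ^ ((m : ℤ) - j) * m !
      * (∑ T ∈ powersetCard (2 * n - m) ((puncturedIcc n).erase j), ∏ l ∈ T, (l : ℝ))
      / ((n + j).toNat ! * (n - j).toNat !) :=
  if_neg hj

lemma abs_centralDiffCoef_le_of_mem {m n : ℕ} {j : ℤ} (hj : j ∈ puncturedIcc n) :
    |centralDiffCoef m n j|
      ≤ m ! * (∑ T ∈ powersetCard (2 * n - m) ((puncturedIcc n).erase j), ∏ l ∈ T, |(l : ℝ)|)
        / (n ! * n !) := by
  obtain ⟨hj0, hjn⟩ := mem_erase.mp hj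
  obtain ⟨hjl, hju⟩ := mem_Icc.mp hjn
  have hsign : |(-1 : ℝ) ^ ((m : ℤ) - j)| = 1 := by simp
  have hnum : |∑ T ∈ powersetCard (2 * n - m) ((puncturedIcc n).erase j), ∏ l ∈ T, (l : ℝ)|
      ≤ ∑ T ∈ powersetCard (2 * n - m) ((puncturedIcc n).erase j), ∏ l ∈ T, |(l : ℝ)| :=
    (abs_sum_le_sum_abs _ _).trans_eq (sum_congr rfl fun T _ => abs_prod _ _)
  have hden : (n ! * n ! : ℝ) ≤ (n + j).toNat ! * (n - j).toNat ! := by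
    exact_mod_cast Nat.factorial_mul_factorial_le_of_add_eq (by omega)
  rw [centralDiffCoef_of_ne_zero hj0, abs_div, abs_mul, abs_mul, hsign, one_mul, Nat.abs_cast,
    abs_of_pos (by positivity : (0 : ℝ) < (n + j).toNat ! * (n - j).toNat !)]
  gcongr

lemma factorial_mul_sum_powersetCard_prod_abs_erase_le {m n : ℕ} {j : ℤ} (hj : j ∈ puncturedIcc n)
    (hm : 1 ≤ m) (hmn : m ≤ 2 * n) :
    (m - 1)! * ∑ T ∈ powersetCard (2 * n - m) ((puncturedIcc n).erase j), ∏ l ∈ T, |(l : ℝ)|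
      ≤ n ! * n ! / |(j : ℝ)| * (2 * (1 + Real.log n)) ^ (m - 1) := by
  set u := (puncturedIcc n).erase j
  have hu : ∀ l ∈ u, |(l : ℝ)| ≠ 0 := fun l hl => by
    simpa using ne_of_mem_erase (mem_of_mem_erase hl)
  have hcard : #u = 2 * n - 1 := by rw [card_erase_of_mem hj, card_puncturedIcc]
  have hprod : ∏ l ∈ u, |(l : ℝ)| = n ! * n ! / |(j : ℝ)| := by
    have hj0 : |(j : ℝ)| ≠ 0 := by simpa using ne_of_mem_erase hj
    rw [eq_div_iff hj0, mul_comm, mul_prod_erase _ (fun l : ℤ => |(l : ℝ)|) hj,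
      prod_abs_puncturedIcc]
  have hsum : ∑ l ∈ u, |(l : ℝ)|⁻¹ ≤ 2 * (1 + Real.log n) :=
    (sum_le_sum_of_subset_of_nonneg (erase_subset j _) fun _ _ _ => by positivity).trans
      (sum_inv_abs_puncturedIcc_le n)
  rw [sum_powersetCard_prod_eq_prod_mul_sum_powersetCard_prod_inv hu (by omega),
    show #u - (2 * n - m) = m - 1 by omega, hprod, mul_left_comm]
  gcongr
  calc _ ≤ (∑ l ∈ u, |(l : ℝ)|⁻¹) ^ (m - 1) := by
        simpa only [prod_inv_distrib] using
          factorial_mul_sum_powersetCard_prod_le_pow (s := u) (f := fun l : ℤ => |(l : ℝ)|⁻¹)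
            (fun _ _ => by positivity) (m - 1)
    _ ≤ _ := pow_le_pow_left₀ (sum_nonneg fun _ _ => by positivity) hsum _

lemma abs_centralDiffCoef_le {m n : ℕ} {j : ℤ} (hj : j ∈ puncturedIcc n) (hm : 1 ≤ m)
    (hmn : m ≤ 2 * n) :
    |centralDiffCoef m n j| ≤ m * |(j : ℝ)|⁻¹ * (2 * (1 + Real.log n)) ^ (m - 1) := by
  have hfac : (m ! : ℝ) = m * (m - 1)! := by
    rw [← Nat.mul_factorial_pred (by omega : m ≠ 0)]
    push_cast
    rfl
  calc |centralDiffCoef m n j|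
      ≤ m * ((m - 1)! * ∑ T ∈ powersetCard (2 * n - m) ((puncturedIcc n).erase j),
          ∏ l ∈ T, |(l : ℝ)|) / (n ! * n !) := by
        rw [← mul_assoc, ← hfac]
        exact abs_centralDiffCoef_le_of_mem hj
    _ ≤ m * (n ! * n ! / |(j : ℝ)| * (2 * (1 + Real.log n)) ^ (m - 1)) / (n ! * n !) := by
        gcongr _ * ?_ / _
        exact factorial_mul_sum_powersetCard_prod_abs_erase_le hj hm hmn
    _ = _ := by field_simp

theorem sum_abs_centralDiffCoef_le_general (m n : ℕ) (hm : 1 ≤ m)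
    (hmn : m ≤ 2 * n) :
    ∑ j ∈ Finset.Icc (-(n : ℤ)) n, |centralDiffCoef m n j|
      ≤ 2 * m * (2 * (1 + Real.log n)) ^ m := by
  set H := 2 * (1 + Real.log n)
  have hsplit : ∑ j ∈ Icc (-(n : ℤ)) n, |centralDiffCoef m n j|
      = |centralDiffCoef m n 0| + ∑ j ∈ puncturedIcc n, |centralDiffCoef m n j| :=
    (add_sum_erase _ _ (by simp)).symm
  have hzero : |centralDiffCoef m n 0| ≤ ∑ j ∈ puncturedIcc n, |centralDiffCoef m n j| := by
    rw [centralDiffCoef_zero, abs_neg]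
    exact abs_sum_le_sum_abs _ _
  have hnonzero : ∑ j ∈ puncturedIcc n, |centralDiffCoef m n j| ≤ m * H ^ m :=
    calc ∑ j ∈ puncturedIcc n, |centralDiffCoef m n j|
        ≤ ∑ j ∈ puncturedIcc n, m * H ^ (m - 1) * |(j : ℝ)|⁻¹ :=
          sum_le_sum fun j hj => (abs_centralDiffCoef_le hj hm hmn).trans_eq (by ring)
      _ = m * H ^ (m - 1) * ∑ j ∈ puncturedIcc n, |(j : ℝ)|⁻¹ := (mul_sum _ _ _).symm
      _ ≤ m * H ^ (m - 1) * H := by gcongr; exact sum_inv_abs_puncturedIcc_le n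
      _ = m * H ^ m := by rw [mul_assoc, ← pow_succ, Nat.sub_add_cancel hm]
  linarith

theorem sum_abs_centralDiffCoef_le (m n : ℕ) (hm : 1 ≤ m) (hn : 1 ≤ n)
    (hmn : m ≤ 2 * n) :
    ∑ j ∈ Finset.Icc (-(n : ℤ)) n, |centralDiffCoef m n j|
      ≤ 2 * m * (2 * (1 + Real.log n)) ^ m :=
  sum_abs_centralDiffCoef_le_general m n hm hmn
end
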